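/- Let G = (C,F) be a finite weighted graph satisfying (C2) (all cuts have nonnegative weight), and let (S,T) be a minimum-weight cut. Then for any cut (A,B) of the induced subgraph on T, 2·w(A,B) ≥ w(S,T) ≥ 0; in particular every cut of the induced subgraph on T has nonnegative weight. -/

import Mathlib

open Finset
open scoped Classical

/-- Weight of the cut `(S,T)` in graph `G` with edge weights `w`. -/
noncomputable def cutW {C : Type*} [Fintype C] (G : SimpleGraph C)
    (w : C → C → ℝ) (S T : Finset C) : ℝ :=
  ∑ i ∈ S, ∑ j ∈ T, if G.Adj i j then w i j else 0

lemma cutW_union_left {C : Type*} [Fintype C] [DecidableEq C] (G : SimpleGraph C)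
    (w : C → C → ℝ) (S A B : Finset C) (h : Disjoint S A) :
    cutW G w (S ∪ A) B = cutW G w S B + cutW G w A B := by
  simp [cutW, Finset.sum_union h]

lemma cutW_union_right {C : Type*} [Fintype C] [DecidableEq C] (G : SimpleGraph C)
    (w : C → C → ℝ) (S A B : Finset C) (h : Disjoint A B) :
    cutW G w S (A ∪ B) = cutW G w S A + cutW G w S B := by
  simp [cutW, Finset.sum_union h, Finset.sum_add_distrib]

lemma cutW_comm {C : Type*} [Fintype C] (G : SimpleGraph C)
    (w : C → C → ℝ) (hw : ∀ i j : C, w i j = w j i) (A B : Finset C) :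
    cutW G w A B = cutW G w B A := by
  rw [cutW, cutW, Finset.sum_comm]
  refine Finset.sum_congr rfl fun i _ => Finset.sum_congr rfl fun j _ => ?_
  by_cases h : G.Adj i j
  · simp [h, h.symm, hw j i]
  · have h' : ¬ G.Adj j i := fun h' => h h'.symm
    simp [h, h']

/-- If `G` satisfies (C2) (all cuts have nonnegative weight) and `(S, Sᶜ)` is a
minimum-weight cut, then for any cut `(A,B)` of the induced subgraph on `T = Sᶜ`
we have `2·w(A,B) ≥ w(S,T) ≥ 0`. -/
theorem induced_cut_bound
    {C : Type*} [Fintype C] [DecidableEq C]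
    (G : SimpleGraph C) (w : C → C → ℝ)
    (hw : ∀ i j : C, w i j = w j i)
    (hC2 : ∀ S' : Finset C, S'.Nonempty → S'ᶜ.Nonempty → 0 ≤ cutW G w S' S'ᶜ)
    (S : Finset C) (hS : S.Nonempty) (hT : Sᶜ.Nonempty)
    (hmin : ∀ S' : Finset C, S'.Nonempty → S'ᶜ.Nonempty →
      cutW G w S Sᶜ ≤ cutW G w S' S'ᶜ)
    (A B : Finset C) (hA : A.Nonempty) (hB : B.Nonempty)
    (hdisj : Disjoint A B) (hunion : A ∪ B = Sᶜ) :
    cutW G w S Sᶜ ≤ 2 * cutW G w A B ∧ 0 ≤ cutW G w S Sᶜ := by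
  have hApos : A ⊆ Sᶜ := hunion ▸ Finset.subset_union_left
  have hBpos : B ⊆ Sᶜ := hunion ▸ Finset.subset_union_right
  have hSA : Disjoint S A :=
    Finset.disjoint_left.2 fun {x} hx hxA => Finset.mem_compl.1 (hApos hxA) hx
  have hSB : Disjoint S B :=
    Finset.disjoint_left.2 fun {x} hx hxB => Finset.mem_compl.1 (hBpos hxB) hx
  have hcompA : (S ∪ A)ᶜ = B := by
    ext x
    simp only [Finset.mem_compl, Finset.mem_union, not_or]
    constructor
    · rintro ⟨hxS, hxA⟩
      have hx : x ∈ A ∪ B := hunion.symm ▸ Finset.mem_compl.2 hxS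
      rcases Finset.mem_union.1 hx with h | h
      · exact absurd h hxA
      · exact h
    · intro hxB
      exact ⟨Finset.mem_compl.1 (hBpos hxB),
        fun hxA => Finset.disjoint_left.1 hdisj hxA hxB⟩
  have hcompB : (S ∪ B)ᶜ = A := by
    ext x
    simp only [Finset.mem_compl, Finset.mem_union, not_or]
    constructor
    · rintro ⟨hxS, hxB⟩
      have hx : x ∈ A ∪ B := hunion.symm ▸ Finset.mem_compl.2 hxS
      rcases Finset.mem_union.1 hx with h | h
      · exact h
      · exact absurd h hxB
    · intro hxA
      exact ⟨Finset.mem_compl.1 (hApos hxA),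
        fun hxB => Finset.disjoint_left.1 hdisj hxA hxB⟩
  have h1 : cutW G w S Sᶜ ≤ cutW G w S B + cutW G w A B := by
    have := hmin (S ∪ A) (hS.mono Finset.subset_union_left) (hcompA ▸ hB)
    rwa [hcompA, cutW_union_left G w S A B hSA] at this
  have h2 : cutW G w S Sᶜ ≤ cutW G w S A + cutW G w B A := by
    have := hmin (S ∪ B) (hS.mono Finset.subset_union_left) (hcompB ▸ hA)
    rwa [hcompB, cutW_union_left G w S B A hSB] at this
  have hsplit : cutW G w S Sᶜ = cutW G w S A + cutW G w S B := by
    rw [← hunion, cutW_union_right G w S A B hdisj]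
  have hBA : cutW G w B A = cutW G w A B := cutW_comm G w hw B A
  constructor
  · linarith
  · exact hC2 S hS hT
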